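/- The collection T = {Φ_w(G_q) : w a finite word over {1,…,J}, q = 1,…,Q} is an open tiling of C \ F: the tiles are pairwise disjoint open sets, none of them intersects F, and C = closure(⋃ Φ_w(G_q)). -/

import Mathlib

/-!
Write `O = int (C₀ \ C₁)`; every tile `Φ_w(G)` lies in `Φ_w(O)`. The tileset condition propagates
to words: the pieces `Φ_w(C₀)` with `|w| = k` have pairwise disjoint interiors, and since they are
convex bodies, an open set inside one of these interiors misses every other piece. So `Φ_w(O)`,
which lies in `int Φ_w(C₀)` and avoids `Φ_w(C₁)`, misses `C_{|w|+1}`; that set contains `F` and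
every `Φ_{w'}(C₀)` with `|w'| > |w|`.

For density, an open subset of `int C₀` missing every `Φ_w(O)` lies in every `C_k`: a point of
`C_k` is a limit of points of `int Φ_v(C₀)`, `|v| = k`, and off `C_{k+1}` these lie in `Φ_v(O)`.
But `vol C_{k+1} ≤ θ vol C_k` with `θ = ∑ |det Φ_j|`, and `θ < 1` because `vol C₁ = θ vol C₀` (the
pieces overlap only in boundaries of convex sets) while `C₀ \ C₁` has interior.
-/

open Set

noncomputable def wordMap {d J : ℕ}
    (Φ : Fin J → (EuclideanSpace ℝ (Fin d) →ᵃ[ℝ] EuclideanSpace ℝ (Fin d))) :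
    List (Fin J) → (EuclideanSpace ℝ (Fin d) → EuclideanSpace ℝ (Fin d))
  | [] => id
  | j :: w => (Φ j) ∘ wordMap Φ w

open Filter MeasureTheory Topology

theorem connectedComponentIn_disjoint {α : Type*} [TopologicalSpace α] {U : Set α} {x y : α}
    (h : connectedComponentIn U x ≠ connectedComponentIn U y) :
    Disjoint (connectedComponentIn U x) (connectedComponentIn U y) :=
  disjoint_left.2 fun _ hx hy =>
    h ((connectedComponentIn_eq hx).trans (connectedComponentIn_eq hy).symm)

section Convex

variable {E : Type*} [NormedAddCommGroup E] [NormedSpace ℝ E]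

theorem IsCompact.convexHull [FiniteDimensional ℝ E] {s : Set E} (hs : IsCompact s) :
    IsCompact (_root_.convexHull ℝ s) := by
  -- Carathéodory: a point of the hull is a convex combination of at most `finrank + 1` points.
  let combo (m : ℕ) (p : (Fin m → ℝ) × (Fin m → E)) : E := ∑ i, p.1 i • p.2 i
  suffices h : _root_.convexHull ℝ s = ⋃ m : Fin (Module.finrank ℝ E + 2),
      combo m '' (stdSimplex ℝ (Fin m) ×ˢ univ.pi fun _ => s) by
    rw [h]
    exact isCompact_iUnion fun m => ((isCompact_stdSimplex ℝ _).prod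
      (isCompact_univ_pi fun _ => hs)).image (by fun_prop)
  refine Subset.antisymm (fun x hx => ?_) (iUnion_subset fun m => ?_)
  · obtain ⟨ι, _, z, w, hzs, hz, hw₀, hw₁, rfl⟩ := eq_pos_convex_span_of_mem_convexHull hx
    have hcard : Fintype.card ι < Module.finrank ℝ E + 2 := by
      have := Submodule.finrank_le (vectorSpan ℝ (range z))
      have := hz.card_le_finrank_succ
      omega
    let e := (Fintype.equivFin ι).symm
    refine mem_iUnion.2 ⟨⟨_, hcard⟩, (w ∘ e, z ∘ e),
      ⟨⟨fun i => (hw₀ _).le, ?_⟩, fun i _ => hzs (mem_range_self _)⟩, ?_⟩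
    · rw [← hw₁]; exact e.sum_comp w
    · exact e.sum_comp fun i => w i • z i
  · rintro _ ⟨⟨w, z⟩, ⟨hw, hz⟩, rfl⟩
    exact mem_convexHull_of_exists_fintype w z hw.1 hw.2 (fun i => hz i (mem_univ i)) rfl

theorem Convex.subset_closure_interior {s : Set E} (hs : Convex ℝ s)
    (hs' : (interior s).Nonempty) : s ⊆ closure (interior s) := by
  rw [hs.closure_interior_eq_closure_of_nonempty_interior hs']
  exact subset_closure

theorem Convex.disjoint_of_disjoint_interior {s U : Set E} (hs : Convex ℝ s)
    (hs' : (interior s).Nonempty) (hU : IsOpen U) (h : Disjoint U (interior s)) :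
    Disjoint U s :=
  (h.closure_right hU).mono_right (hs.subset_closure_interior hs')

theorem AffineMap.image_interior_of_bijective [FiniteDimensional ℝ E]
    {f : E →ᵃ[ℝ] E} (hf : Function.Bijective f) (s : Set E) : f '' interior s = interior (f '' s) :=
  (AffineEquiv.ofBijective hf).toContinuousAffineEquiv.toHomeomorph.image_interior s

end Convex

section Iterates

variable {α ι : Type*} {Φ : ι → α → α} {C : ℕ → Set α}

theorem antitone_of_succ_eq_iUnion_image (hC : ∀ k, C (k + 1) = ⋃ j, Φ j '' C k)
    (h10 : C 1 ⊆ C 0) : Antitone C := by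
  refine antitone_nat_of_succ_le fun k => ?_
  induction k with
  | zero => exact h10
  | succ k ih =>
    calc C (k + 1 + 1) = ⋃ j, Φ j '' C (k + 1) := hC (k + 1)
      _ ⊆ ⋃ j, Φ j '' C k := iUnion_mono fun j => image_mono ih
      _ = C (k + 1) := (hC k).symm

theorem subset_of_succ_eq_iUnion_image {F : Set α} (hC : ∀ k, C (k + 1) = ⋃ j, Φ j '' C k)
    (hF : F ⊆ ⋃ j, Φ j '' F) (h0 : F ⊆ C 0) : ∀ k, F ⊆ C k
  | 0 => h0
  | k + 1 => hF.trans <| by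
    rw [hC k]; exact iUnion_mono fun j => image_mono (subset_of_succ_eq_iUnion_image hC hF h0 k)

theorem isCompact_of_succ_eq_iUnion_image [TopologicalSpace α] [Finite ι]
    (hC : ∀ k, C (k + 1) = ⋃ j, Φ j '' C k) (hΦ : ∀ j, Continuous (Φ j)) (h0 : IsCompact (C 0)) :
    ∀ k, IsCompact (C k)
  | 0 => h0
  | k + 1 => by
    rw [hC k]
    exact isCompact_iUnion fun j => (isCompact_of_succ_eq_iUnion_image hC hΦ h0 k).image (hΦ j)

end Iterates

section Measure

variable {E : Type*} [NormedAddCommGroup E] [NormedSpace ℝ E] [MeasurableSpace E] [BorelSpace E]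
  [FiniteDimensional ℝ E] (μ : Measure E) [μ.IsAddHaarMeasure] {ι : Type*} [Fintype ι]

theorem addHaar_image_affineMap (f : E →ᵃ[ℝ] E) (s : Set E) :
    μ (f '' s) = ENNReal.ofReal |LinearMap.det f.linear| * μ s := by
  have : f '' s = (· + f 0) '' (f.linear '' s) := by
    conv_lhs => rw [f.decomp]
    rw [image_image]; rfl
  rw [this, image_add_right, measure_preimage_add_right, Measure.addHaar_image_linearMap]

theorem addHaar_iUnion_image_le (Φ : ι → E →ᵃ[ℝ] E) (s : Set E) :
    μ (⋃ j, Φ j '' s) ≤ (∑ j, ENNReal.ofReal |LinearMap.det (Φ j).linear|) * μ s := by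
  rw [Finset.sum_mul]
  refine (measure_iUnion_fintype_le μ _).trans_eq (Finset.sum_congr rfl fun j _ => ?_)
  exact addHaar_image_affineMap μ (Φ j) s

theorem Convex.addHaar_iUnion_image {Φ : ι → E →ᵃ[ℝ] E} {s : Set E} (hs : Convex ℝ s)
    (hΦ : Pairwise fun j l => Disjoint (interior (Φ j '' s)) (interior (Φ l '' s))) :
    μ (⋃ j, Φ j '' s) = (∑ j, ENNReal.ofReal |LinearMap.det (Φ j).linear|) * μ s := by
  have hae : Pairwise fun j l => AEDisjoint μ (Φ j '' s) (Φ l '' s) := by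
    intro j l hjl
    refine measure_mono_null (t := frontier (Φ j '' s) ∪ frontier (Φ l '' s)) ?_
      (measure_union_null ((hs.affine_image _).addHaar_frontier μ)
        ((hs.affine_image _).addHaar_frontier μ))
    rintro x ⟨hxj, hxl⟩
    by_cases hx : x ∈ interior (Φ j '' s)
    · exact Or.inr ⟨subset_closure hxl, (hΦ hjl).notMem_of_mem_left hx⟩
    · exact Or.inl ⟨subset_closure hxj, hx⟩
  rw [measure_iUnion₀ hae fun j => (hs.affine_image _).nullMeasurableSet μ, tsum_fintype,
    Finset.sum_mul]
  exact Finset.sum_congr rfl fun j _ => addHaar_image_affineMap μ (Φ j) s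

theorem tendsto_addHaar_of_succ_eq_iUnion_image {Φ : ι → E →ᵃ[ℝ] E} {C : ℕ → Set E}
    (hC : ∀ k, C (k + 1) = ⋃ j, Φ j '' C k) (hconv : Convex ℝ (C 0)) (hcpt : IsCompact (C 0))
    (h10 : C 1 ⊆ C 0) (hnt : (interior (C 0 \ C 1)).Nonempty)
    (hΦ : Pairwise fun j l => Disjoint (interior (Φ j '' C 0)) (interior (Φ l '' C 0))) :
    Tendsto (fun k => μ (C k)) atTop (𝓝 0) := by
  set θ := ∑ j, ENNReal.ofReal |LinearMap.det (Φ j).linear|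
  have hle : ∀ k, μ (C k) ≤ θ ^ k * μ (C 0) := by
    intro k
    induction k with
    | zero => simp
    | succ k ih =>
      calc μ (C (k + 1)) ≤ θ * μ (C k) := hC k ▸ addHaar_iUnion_image_le μ Φ (C k)
        _ ≤ θ * (θ ^ k * μ (C 0)) := by gcongr
        _ = θ ^ (k + 1) * μ (C 0) := by ring
  have hθ : θ < 1 := by
    have hlt : μ (C 1) < μ (C 0) := by
      have hsum : μ (C 1) + μ (interior (C 0 \ C 1)) ≤ μ (C 0) := by
        rw [← measure_union (disjoint_sdiff_right.mono_right interior_subset)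
          isOpen_interior.measurableSet]
        exact measure_mono (union_subset h10 (interior_subset.trans sdiff_subset))
      refine lt_of_lt_of_le (ENNReal.lt_add_right ?_ (isOpen_interior.measure_ne_zero μ hnt)) hsum
      exact ((measure_mono h10).trans_lt hcpt.measure_lt_top).ne
    rw [hC 0, hconv.addHaar_iUnion_image μ hΦ] at hlt
    by_contra! h
    exact hlt.not_ge (le_mul_of_one_le_left zero_le h)
  have hgeom : Tendsto (fun k => θ ^ k * μ (C 0)) atTop (𝓝 0) := by
    simpa using ENNReal.Tendsto.mul_const (ENNReal.tendsto_pow_atTop_nhds_zero_of_lt_one hθ)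
      (Or.inr hcpt.measure_lt_top.ne)
  exact tendsto_of_tendsto_of_tendsto_of_le_of_le tendsto_const_nhds hgeom (fun _ => zero_le) hle

end Measure

section Words

variable {d J : ℕ} {Φ : Fin J → (EuclideanSpace ℝ (Fin d) →ᵃ[ℝ] EuclideanSpace ℝ (Fin d))}

@[simp]
theorem wordMap_nil : wordMap Φ [] = id := rfl

@[simp]
theorem wordMap_cons (j : Fin J) (w : List (Fin J)) : wordMap Φ (j :: w) = Φ j ∘ wordMap Φ w :=
  rfl

noncomputable def wordHomeomorph (hΦ : ∀ j, Function.Bijective (Φ j)) :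
    List (Fin J) → EuclideanSpace ℝ (Fin d) ≃ₜ EuclideanSpace ℝ (Fin d)
  | [] => Homeomorph.refl _
  | j :: w => (wordHomeomorph hΦ w).trans
      (AffineEquiv.ofBijective (hΦ j)).toContinuousAffineEquiv.toHomeomorph

@[simp]
theorem coe_wordHomeomorph (hΦ : ∀ j, Function.Bijective (Φ j)) :
    ∀ w, ⇑(wordHomeomorph hΦ w) = wordMap Φ w
  | [] => rfl
  | j :: w => funext fun x => congrArg (Φ j) (congrFun (coe_wordHomeomorph hΦ w) x)

theorem injective_wordMap (hΦ : ∀ j, Function.Bijective (Φ j)) (w : List (Fin J)) :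
    Function.Injective (wordMap Φ w) :=
  coe_wordHomeomorph hΦ w ▸ (wordHomeomorph hΦ w).injective

theorem isOpenMap_wordMap (hΦ : ∀ j, Function.Bijective (Φ j)) (w : List (Fin J)) :
    IsOpenMap (wordMap Φ w) :=
  coe_wordHomeomorph hΦ w ▸ (wordHomeomorph hΦ w).isOpenMap

theorem image_interior_wordMap (hΦ : ∀ j, Function.Bijective (Φ j)) (w : List (Fin J))
    (s : Set (EuclideanSpace ℝ (Fin d))) :
    wordMap Φ w '' interior s = interior (wordMap Φ w '' s) :=
  coe_wordHomeomorph hΦ w ▸ (wordHomeomorph hΦ w).image_interior s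

theorem image_wordMap_interior_sdiff_subset (hΦ : ∀ j, Function.Bijective (Φ j))
    (w : List (Fin J)) (s t : Set (EuclideanSpace ℝ (Fin d))) :
    wordMap Φ w '' interior (s \ t) ⊆ interior (wordMap Φ w '' s) := by
  rw [image_interior_wordMap hΦ]
  exact interior_mono (image_mono sdiff_subset)

theorem Convex.image_wordMap {s : Set (EuclideanSpace ℝ (Fin d))} (hs : Convex ℝ s) :
    ∀ w, Convex ℝ (wordMap Φ w '' s)
  | [] => by simpa using hs
  | j :: w => by
    rw [wordMap_cons, image_comp]
    exact (hs.image_wordMap w).affine_image (Φ j)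

theorem image_wordMap_subset {K : Set (EuclideanSpace ℝ (Fin d))} (hK : ∀ j, Φ j '' K ⊆ K) :
    ∀ w, wordMap Φ w '' K ⊆ K
  | [] => by simp
  | j :: w => by
    rw [wordMap_cons, image_comp]
    exact (image_mono (image_wordMap_subset hK w)).trans (hK j)

theorem mem_add_iff_exists_wordMap {C : ℕ → Set (EuclideanSpace ℝ (Fin d))}
    (hC : ∀ k, C (k + 1) = ⋃ j, Φ j '' C k) (m : ℕ) :
    ∀ k x, x ∈ C (k + m) ↔ ∃ w : List (Fin J), w.length = k ∧ x ∈ wordMap Φ w '' C m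
  | 0, x => by simp [List.length_eq_zero_iff]
  | k + 1, x => by
    rw [Nat.add_right_comm, hC, mem_iUnion]
    constructor
    · rintro ⟨j, y, hy, rfl⟩
      obtain ⟨w, rfl, z, hz, rfl⟩ := (mem_add_iff_exists_wordMap hC m k y).1 hy
      exact ⟨j :: w, rfl, z, hz, rfl⟩
    · rintro ⟨_ | ⟨j, w⟩, hw, z, hz, rfl⟩
      · simp at hw
      · exact ⟨j, _, (mem_add_iff_exists_wordMap hC m k _).2
          ⟨w, Nat.succ_injective hw, z, hz, rfl⟩, rfl⟩

theorem disjoint_interior_image_wordMap (hΦ : ∀ j, Function.Bijective (Φ j))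
    {K : Set (EuclideanSpace ℝ (Fin d))} (hK : ∀ j, Φ j '' K ⊆ K)
    (hdisj : Pairwise fun j l => Disjoint (interior (Φ j '' K)) (interior (Φ l '' K))) :
    ∀ {w w' : List (Fin J)}, w.length = w'.length → w ≠ w' →
      Disjoint (interior (wordMap Φ w '' K)) (interior (wordMap Φ w' '' K))
  | [], [], _, hne => absurd rfl hne
  | j :: u, j' :: u', hlen, hne => by
    simp only [wordMap_cons, image_comp]
    by_cases hj : j = j'
    · subst hj
      have hu : u ≠ u' := fun h => hne (h ▸ rfl)
      rw [← (Φ j).image_interior_of_bijective (hΦ j),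
        ← (Φ j).image_interior_of_bijective (hΦ j), disjoint_image_iff (hΦ j).injective]
      exact disjoint_interior_image_wordMap hΦ hK hdisj (Nat.succ_injective hlen) hu
    · exact (hdisj hj).mono (interior_mono (image_mono (image_wordMap_subset hK u)))
        (interior_mono (image_mono (image_wordMap_subset hK u')))

end Words

section Tiling

variable {d J : ℕ} {Φ : Fin J → (EuclideanSpace ℝ (Fin d) →ᵃ[ℝ] EuclideanSpace ℝ (Fin d))}
  {C : ℕ → Set (EuclideanSpace ℝ (Fin d))}

theorem disjoint_image_wordMap_interior_sdiff (hΦ : ∀ j, Function.Bijective (Φ j))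
    (hC : ∀ k, C (k + 1) = ⋃ j, Φ j '' C k) (hconv : Convex ℝ (C 0))
    (hint : (interior (C 0)).Nonempty) (hK : ∀ j, Φ j '' C 0 ⊆ C 0)
    (hdisj : Pairwise fun j l => Disjoint (interior (Φ j '' C 0)) (interior (Φ l '' C 0)))
    (w : List (Fin J)) :
    Disjoint (wordMap Φ w '' interior (C 0 \ C 1)) (C (w.length + 1)) := by
  refine disjoint_right.2 fun x hx hxO => ?_
  obtain ⟨v, hv, z, hz, rfl⟩ := (mem_add_iff_exists_wordMap hC 1 _ x).1 hx
  by_cases hvw : v = w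
  · subst hvw
    obtain ⟨y, hy, hyz⟩ := hxO
    exact (interior_subset hy).2 (injective_wordMap hΦ v hyz ▸ hz)
  · have hvK : Disjoint (interior (wordMap Φ w '' C 0)) (wordMap Φ v '' C 0) :=
      (hconv.image_wordMap v).disjoint_of_disjoint_interior
        (image_interior_wordMap hΦ v _ ▸ hint.image _) isOpen_interior
        (disjoint_interior_image_wordMap hΦ hK hdisj hv.symm (Ne.symm hvw))
    have h10 : C 1 ⊆ C 0 := hC 0 ▸ iUnion_subset hK
    exact hvK.notMem_of_mem_left (image_wordMap_interior_sdiff_subset hΦ w _ _ hxO)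
      (image_mono h10 ⟨z, hz, rfl⟩)

theorem pairwise_disjoint_image_wordMap_interior_sdiff (hΦ : ∀ j, Function.Bijective (Φ j))
    (hC : ∀ k, C (k + 1) = ⋃ j, Φ j '' C k) (hconv : Convex ℝ (C 0))
    (hint : (interior (C 0)).Nonempty) (hK : ∀ j, Φ j '' C 0 ⊆ C 0)
    (hdisj : Pairwise fun j l => Disjoint (interior (Φ j '' C 0)) (interior (Φ l '' C 0))) :
    Pairwise fun w w' : List (Fin J) =>
      Disjoint (wordMap Φ w '' interior (C 0 \ C 1)) (wordMap Φ w' '' interior (C 0 \ C 1)) := by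
  intro w w' hne
  wlog hlen : w.length ≤ w'.length generalizing w w'
  · exact (this hne.symm (le_of_not_ge hlen)).symm
  have hO v := image_wordMap_interior_sdiff_subset hΦ v (C 0) (C 1)
  rcases hlen.lt_or_eq with hlt | heq
  · have hanti := antitone_of_succ_eq_iUnion_image hC (hC 0 ▸ iUnion_subset hK)
    refine (disjoint_image_wordMap_interior_sdiff hΦ hC hconv hint hK hdisj w).mono_right ?_
    exact (hO w').trans <| interior_subset.trans fun x hx =>
      hanti hlt ((mem_add_iff_exists_wordMap hC 0 _ x).2 ⟨w', rfl, hx⟩)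
  · exact (disjoint_interior_image_wordMap hΦ hK hdisj heq hne).mono (hO w) (hO w')

theorem interior_sdiff_closure_subset (hΦ : ∀ j, Function.Bijective (Φ j))
    (hC : ∀ k, C (k + 1) = ⋃ j, Φ j '' C k) (hconv : Convex ℝ (C 0))
    (hint : (interior (C 0)).Nonempty) (hclosed : ∀ k, IsClosed (C k)) :
    ∀ k, interior (C 0) \ closure (⋃ w, wordMap Φ w '' interior (C 0 \ C 1)) ⊆ C k
  | 0 => fun _ hy => interior_subset hy.1
  | k + 1 => fun y hy => by
    by_contra hyC
    obtain ⟨v, rfl, hyv⟩ := (mem_add_iff_exists_wordMap hC 0 _ y).1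
      (interior_sdiff_closure_subset hΦ hC hconv hint hclosed k hy)
    have hycl : y ∈ closure (interior (wordMap Φ v '' C 0)) :=
      (hconv.image_wordMap v).subset_closure_interior
        (image_interior_wordMap hΦ v _ ▸ hint.image _) hyv
    obtain ⟨_, hzW, hz⟩ := mem_closure_iff.1 hycl _
      ((isOpen_interior.sdiff isClosed_closure).sdiff (hclosed _)) ⟨hy, hyC⟩
    rw [← image_interior_wordMap hΦ] at hz
    obtain ⟨z, hz, rfl⟩ := hz
    have hz1 : z ∉ C 1 := fun h =>
      hzW.2 ((mem_add_iff_exists_wordMap hC 1 _ _).2 ⟨v, rfl, z, h, rfl⟩)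
    have hzO : z ∈ interior (C 0 \ C 1) :=
      interior_maximal (sdiff_subset_sdiff_left interior_subset)
        (isOpen_interior.sdiff (hclosed 1)) ⟨hz, hz1⟩
    exact hzW.1.2 (subset_closure (mem_iUnion.2 ⟨v, z, hzO, rfl⟩))

theorem closure_iUnion_image_wordMap_interior_sdiff (hΦ : ∀ j, Function.Bijective (Φ j))
    (hC : ∀ k, C (k + 1) = ⋃ j, Φ j '' C k) (hconv : Convex ℝ (C 0)) (hcpt : IsCompact (C 0))
    (hK : ∀ j, Φ j '' C 0 ⊆ C 0) (hnt : (interior (C 0 \ C 1)).Nonempty)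
    (hdisj : Pairwise fun j l => Disjoint (interior (Φ j '' C 0)) (interior (Φ l '' C 0))) :
    closure (⋃ w, wordMap Φ w '' interior (C 0 \ C 1)) = C 0 := by
  set U := ⋃ w, wordMap Φ w '' interior (C 0 \ C 1)
  have h10 : C 1 ⊆ C 0 := hC 0 ▸ iUnion_subset hK
  have hclosed k : IsClosed (C k) := (isCompact_of_succ_eq_iUnion_image hC
    (fun j => (Φ j).continuous_of_finiteDimensional) hcpt k).isClosed
  have hint : (interior (C 0)).Nonempty := hnt.mono (interior_mono sdiff_subset)
  refine Subset.antisymm (closure_minimal (iUnion_subset fun w => ?_) (hclosed 0)) ?_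
  · exact (image_mono (interior_subset.trans sdiff_subset)).trans (image_wordMap_subset hK w)
  have hnull : volume (interior (C 0) \ closure U) = 0 :=
    nonpos_iff_eq_zero.1 <| ge_of_tendsto'
      (tendsto_addHaar_of_succ_eq_iUnion_image volume hC hconv hcpt h10 hnt hdisj)
      fun k => measure_mono (interior_sdiff_closure_subset hΦ hC hconv hint hclosed k)
  have hempty : interior (C 0) \ closure U = ∅ :=
    ((isOpen_interior.sdiff isClosed_closure).measure_eq_zero_iff volume).1 hnull
  calc C 0 ⊆ closure (interior (C 0)) := hconv.subset_closure_interior hint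
    _ ⊆ closure (closure U) := closure_mono (sdiff_eq_empty.1 hempty)
    _ = closure U := closure_closure

end Tiling

theorem stmt16_general (d J : ℕ)
    (Φ : Fin J → (EuclideanSpace ℝ (Fin d) →ᵃ[ℝ] EuclideanSpace ℝ (Fin d)))
    (F : Set (EuclideanSpace ℝ (Fin d)))
    (hFc : IsCompact F)
    (hFinv : F = ⋃ j, (Φ j) '' F)
    (hbij : ∀ j, Function.Bijective (Φ j))
    (C : ℕ → Set (EuclideanSpace ℝ (Fin d)))
    (hC0 : C 0 = convexHull ℝ F)
    (hCsucc : ∀ k, C (k + 1) = ⋃ j, (Φ j) '' C k)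
    (hnt : (interior (C 0 \ C 1)).Nonempty)
    (hts : ∀ j ℓ, j ≠ ℓ → interior ((Φ j) '' convexHull ℝ F) ∩ interior ((Φ ℓ) '' convexHull ℝ F) = ∅)
    -- generators: connected components of interior (C 0 \ C 1)
    (Gens : Set (Set (EuclideanSpace ℝ (Fin d))))
    (hGens : Gens = {G | ∃ x ∈ interior (C 0 \ C 1),
      G = connectedComponentIn (interior (C 0 \ C 1)) x}) :
    (∀ w : List (Fin J), ∀ G ∈ Gens, IsOpen (wordMap Φ w '' G)) ∧
    (∀ w w' : List (Fin J), ∀ G ∈ Gens, ∀ G' ∈ Gens, (w, G) ≠ (w', G') →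
      Disjoint (wordMap Φ w '' G) (wordMap Φ w' '' G')) ∧
    (∀ w : List (Fin J), ∀ G ∈ Gens, wordMap Φ w '' G ∩ F = ∅) ∧
    convexHull ℝ F = closure (⋃ w : List (Fin J), ⋃ G ∈ Gens, wordMap Φ w '' G) := by
  have hconv : Convex ℝ (C 0) := hC0 ▸ convex_convexHull ℝ F
  have hK j : Φ j '' C 0 ⊆ C 0 := by
    rw [hC0, AffineMap.image_convexHull]
    exact convexHull_mono ((subset_iUnion (fun i => Φ i '' F) j).trans hFinv.symm.subset)
  have hdisj : Pairwise fun j l => Disjoint (interior (Φ j '' C 0)) (interior (Φ l '' C 0)) :=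
    fun j l hjl => disjoint_iff_inter_eq_empty.2 (hC0 ▸ hts j l hjl)
  have hint : (interior (C 0)).Nonempty := hnt.mono (interior_mono sdiff_subset)
  set O := interior (C 0 \ C 1)
  have hGO : ∀ G ∈ Gens, G ⊆ O := by
    rw [hGens]; rintro _ ⟨x, -, rfl⟩; exact connectedComponentIn_subset _ _
  have hUnion : ⋃ w : List (Fin J), ⋃ G ∈ Gens, wordMap Φ w '' G = ⋃ w, wordMap Φ w '' O :=
    iUnion_congr fun w => Subset.antisymm (iUnion₂_subset fun G hG => image_mono (hGO G hG))
      fun _ ⟨y, hy, hyx⟩ => mem_iUnion₂.2 ⟨_, hGens ▸ ⟨y, hy, rfl⟩,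
        ⟨y, mem_connectedComponentIn hy, hyx⟩⟩
  refine ⟨fun w G hG => ?_, fun w w' G hG G' hG' hne => ?_, fun w G hG => ?_, ?_⟩
  · rw [hGens] at hG
    obtain ⟨x, -, rfl⟩ := hG
    exact isOpenMap_wordMap hbij w _ isOpen_interior.connectedComponentIn
  · by_cases hw : w = w'
    · subst hw
      rw [hGens] at hG hG'
      obtain ⟨x, -, rfl⟩ := hG
      obtain ⟨x', -, rfl⟩ := hG'
      exact (disjoint_image_iff (injective_wordMap hbij w)).2
        (connectedComponentIn_disjoint fun h => hne (h ▸ rfl))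
    · exact (pairwise_disjoint_image_wordMap_interior_sdiff hbij hCsucc hconv hint hK hdisj
        hw).mono (image_mono (hGO G hG)) (image_mono (hGO G' hG'))
  · refine disjoint_iff_inter_eq_empty.1 <|
      (disjoint_image_wordMap_interior_sdiff hbij hCsucc hconv hint hK hdisj w).mono
        (image_mono (hGO G hG)) ?_
    exact subset_of_succ_eq_iUnion_image hCsucc hFinv.subset (hC0 ▸ subset_convexHull ℝ F) _
  · rw [hUnion, closure_iUnion_image_wordMap_interior_sdiff hbij hCsucc hconv
      (hC0 ▸ hFc.convexHull) hK hnt hdisj, hC0]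

theorem stmt16 (d J : ℕ)
    (Φ : Fin J → (EuclideanSpace ℝ (Fin d) →ᵃ[ℝ] EuclideanSpace ℝ (Fin d)))
    (r : Fin J → NNReal) (hr : ∀ j, r j < 1)
    (hlip : ∀ j, LipschitzWith (r j) (Φ j))
    (F : Set (EuclideanSpace ℝ (Fin d)))
    (hFne : F.Nonempty) (hFc : IsCompact F)
    (hFinv : F = ⋃ j, (Φ j) '' F)
    (hbij : ∀ j, Function.Bijective (Φ j))
    (C : ℕ → Set (EuclideanSpace ℝ (Fin d)))
    (hC0 : C 0 = convexHull ℝ F)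
    (hCsucc : ∀ k, C (k + 1) = ⋃ j, (Φ j) '' C k)
    (hnt : (interior (C 0 \ C 1)).Nonempty)
    (hts : ∀ j ℓ, j ≠ ℓ → interior ((Φ j) '' convexHull ℝ F) ∩ interior ((Φ ℓ) '' convexHull ℝ F) = ∅)
    -- generators: connected components of interior (C 0 \ C 1)
    (Gens : Set (Set (EuclideanSpace ℝ (Fin d))))
    (hGens : Gens = {G | ∃ x ∈ interior (C 0 \ C 1),
      G = connectedComponentIn (interior (C 0 \ C 1)) x}) :
    (∀ w : List (Fin J), ∀ G ∈ Gens, IsOpen (wordMap Φ w '' G)) ∧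
    (∀ w w' : List (Fin J), ∀ G ∈ Gens, ∀ G' ∈ Gens, (w, G) ≠ (w', G') →
      Disjoint (wordMap Φ w '' G) (wordMap Φ w' '' G')) ∧
    (∀ w : List (Fin J), ∀ G ∈ Gens, wordMap Φ w '' G ∩ F = ∅) ∧
    convexHull ℝ F = closure (⋃ w : List (Fin J), ⋃ G ∈ Gens, wordMap Φ w '' G) :=
  stmt16_general d J Φ F hFc hFinv hbij C hC0 hCsucc hnt hts Gens hGens
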